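/- Let η : X_rat → ℕ be a finitely supported function whose support Supp η belongs to X_*. Then (g ⊗ I_η)^Γ = (g ⊗ Ĩ_η)^Γ, where Ĩ_η = ∏_{x ∈ Supp η} ∏_{γ ∈ Γ} m_{γ·x}^{η(x)}. -/

import Mathlib

set_option linter.unusedSectionVars false

open scoped TensorProduct

noncomputable section

/-- The action of a group element on the maximal spectrum of `A`
(so that `m_{γ·x} = comap (γ⁻¹ • ·) m_x`). -/
def gammaDot (A Γ : Type*) [CommRing A] [Group Γ] [MulSemiringAction Γ A]
    (γ : Γ) (x : MaximalSpectrum A) : MaximalSpectrum A :=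
  ⟨Ideal.comap (MulSemiringAction.toRingHom Γ A γ⁻¹) x.asIdeal, by
    have := x.isMaximal
    exact Ideal.comap_isMaximal_of_surjective _ (MulAction.surjective γ⁻¹)⟩

/-- A finite set of points of `X` containing no two (distinct) points in the same
`Γ`-orbit, i.e. an element of `X_*`. -/
def NoTwoInOrbit (A Γ : Type*) [CommRing A] [Group Γ] [MulSemiringAction Γ A]
    (s : Finset (MaximalSpectrum A)) : Prop :=
  ∀ x ∈ s, ∀ y ∈ s, ∀ γ : Γ, gammaDot A Γ γ x = y → x = y

/-- The ideal `I_η = ∏_{x ∈ Supp η} m_x ^ η x` of `A`. -/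
def idealOf {A : Type*} [CommRing A] (η : MaximalSpectrum A →₀ ℕ) : Ideal A :=
  η.support.prod fun x => x.asIdeal ^ η x

variable (k A g Γ : Type*)
variable [Field k] [IsAlgClosed k] [CharZero k]
variable [CommRing A] [Algebra k A] [Algebra.FiniteType k A]
variable [LieRing g] [LieAlgebra k g] [Module.Finite k g] [LieAlgebra.IsSemisimple k g]
variable [CommGroup Γ] [Fintype Γ]
variable [MulSemiringAction Γ A] [SMulCommClass Γ k A]
variable [DistribMulAction Γ g] [SMulCommClass Γ k g]

/-- The `k`-submodule `g ⊗ I` of `A ⊗[k] g` determined by an ideal `I ⊆ A`. -/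
def gT (I : Ideal A) : Submodule k (A ⊗[k] g) :=
  Submodule.span k {z | ∃ f ∈ I, ∃ v : g, z = f ⊗ₜ[k] v}

/-- The diagonal action of `γ ∈ Γ` on `A ⊗[k] g` as a `k`-linear map. -/
def diagMap (γ : Γ) : (A ⊗[k] g) →ₗ[k] A ⊗[k] g :=
  TensorProduct.map (DistribMulAction.toLinearMap k A γ) (DistribMulAction.toLinearMap k g γ)

/-- The set of `Γ`-fixed points of `A ⊗[k] g`, i.e. the equivariant map algebra
`(g ⊗ A)^Γ`, as a `k`-submodule. -/
def fixedSub : Submodule k (A ⊗[k] g) :=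
  ⨅ γ : Γ, LinearMap.ker (diagMap k A g Γ γ - LinearMap.id)

lemma mem_fixedSub {z : A ⊗[k] g} :
    z ∈ fixedSub k A g Γ ↔ ∀ γ : Γ, diagMap k A g Γ γ z = z := by
  simp [fixedSub, sub_eq_zero, LinearMap.sub_apply]

/-!
A `Γ`-fixed element of `g ⊗ I_η` lies in `g ⊗ γ • I_η` for every `γ`, and `γ • I_η` is the product
of the `m_{γ·x} ^ η x`. Freeness of the action and `Supp η ∈ X_*` make the points `γ·x` pairwise
distinct, so the ideals `γ • I_η` are pairwise coprime and their intersection is their product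
`Ĩ_η`. Since `g` is free over `k`, `g ⊗ -` commutes with intersections of ideals.
-/

open scoped Pointwise

section GammaDot

variable {R G : Type*} [CommRing R] [Group G] [MulSemiringAction G R]

lemma gammaDot_asIdeal (γ : G) (x : MaximalSpectrum R) :
    (gammaDot R G γ x).asIdeal = γ • x.asIdeal := by
  ext a
  rw [Ideal.mem_pointwise_smul_iff_inv_smul_mem]
  rfl

lemma gammaDot_one (x : MaximalSpectrum R) : gammaDot R G 1 x = x :=
  MaximalSpectrum.ext (by rw [gammaDot_asIdeal, one_smul])

lemma gammaDot_mul (γ δ : G) (x : MaximalSpectrum R) :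
    gammaDot R G γ (gammaDot R G δ x) = gammaDot R G (γ * δ) x :=
  MaximalSpectrum.ext (by rw [gammaDot_asIdeal, gammaDot_asIdeal, gammaDot_asIdeal, mul_smul])

lemma smul_idealOf (γ : G) (η : MaximalSpectrum R →₀ ℕ) :
    γ • idealOf η = ∏ x ∈ η.support, (gammaDot R G γ x).asIdeal ^ η x := by
  simp only [idealOf, Finset.smul_prod', smul_pow', gammaDot_asIdeal]

lemma gammaDot_ne_gammaDot
    (hfree : ∀ γ : G, γ ≠ 1 → ∀ x : MaximalSpectrum R, gammaDot R G γ x ≠ x)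
    {s : Finset (MaximalSpectrum R)} (hs : NoTwoInOrbit R G s) {x y : MaximalSpectrum R}
    (hx : x ∈ s) (hy : y ∈ s) {γ δ : G} (hγδ : γ ≠ δ) :
    gammaDot R G γ x ≠ gammaDot R G δ y := by
  intro h
  have hxy : gammaDot R G (δ⁻¹ * γ) x = y := by
    rw [← gammaDot_mul, h, gammaDot_mul, inv_mul_cancel, gammaDot_one]
  obtain rfl := hs x hx y hy _ hxy
  exact hfree _ (fun h1 => hγδ (inv_mul_eq_one.mp h1).symm) x hxy

lemma isCoprime_smul_idealOf
    (hfree : ∀ γ : G, γ ≠ 1 → ∀ x : MaximalSpectrum R, gammaDot R G γ x ≠ x)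
    {η : MaximalSpectrum R →₀ ℕ} (hη : NoTwoInOrbit R G η.support) {γ δ : G} (hγδ : γ ≠ δ) :
    IsCoprime (γ • idealOf η) (δ • idealOf η) := by
  rw [smul_idealOf, smul_idealOf]
  refine .prod_left fun x hx => .prod_right fun y hy => .pow ?_
  exact Ideal.isCoprime_of_isMaximal fun h =>
    gammaDot_ne_gammaDot hfree hη hx hy hγδ (MaximalSpectrum.ext h)

end GammaDot

section TensorIdeal

variable {k A g Γ}

def tensorCoord {ι : Type*} (b : Module.Basis ι k g) (i : ι) : A ⊗[k] g →ₗ[k] A :=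
  TensorProduct.rid k A ∘ₗ LinearMap.lTensor A (b.coord i)

lemma tensorCoord_tmul {ι : Type*} (b : Module.Basis ι k g) (i : ι) (f : A) (v : g) :
    tensorCoord b i (f ⊗ₜ[k] v) = b.repr v i • f := by
  simp [tensorCoord]

lemma sum_tensorCoord_tmul {ι : Type*} [Fintype ι] (b : Module.Basis ι k g) (z : A ⊗[k] g) :
    ∑ i, tensorCoord b i z ⊗ₜ[k] b i = z := by
  induction z using TensorProduct.induction_on with
  | zero => simp
  | tmul f v =>
    simp_rw [tensorCoord_tmul, TensorProduct.smul_tmul, ← TensorProduct.tmul_sum, b.sum_repr]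
  | add z w hz hw => simp_rw [map_add, TensorProduct.add_tmul, Finset.sum_add_distrib, hz, hw]

lemma mem_gT_iff {ι : Type*} [Fintype ι] (b : Module.Basis ι k g) {I : Ideal A}
    {z : A ⊗[k] g} :
    z ∈ gT k A g I ↔ ∀ i, tensorCoord b i z ∈ I := by
  refine ⟨fun hz i => ?_, fun h => ?_⟩
  · refine Submodule.span_induction ?_ (by simp) (fun _ _ _ _ hx hy => ?_) (fun c _ _ hx => ?_) hz
    · rintro _ ⟨f, hf, v, rfl⟩
      rw [tensorCoord_tmul]
      exact I.smul_of_tower_mem _ hf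
    · rw [map_add]; exact I.add_mem hx hy
    · rw [map_smul]; exact I.smul_of_tower_mem c hx
  · rw [← sum_tensorCoord_tmul b z]
    exact Submodule.sum_mem _ fun i _ => Submodule.subset_span ⟨_, h i, _, rfl⟩

lemma gT_mono {I J : Ideal A} (h : I ≤ J) : gT k A g I ≤ gT k A g J :=
  Submodule.span_mono fun _ ⟨f, hf, v, hz⟩ => ⟨f, h hf, v, hz⟩

lemma gT_iInf {ι : Type*} (J : ι → Ideal A) : gT k A g (⨅ i, J i) = ⨅ i, gT k A g (J i) := by
  let b := Module.Free.chooseBasis k g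
  refine le_antisymm (le_iInf fun i => gT_mono (iInf_le J i)) fun z hz => ?_
  rw [mem_gT_iff b]
  exact fun j => Ideal.mem_iInf.mpr fun i => (mem_gT_iff b).mp ((Submodule.mem_iInf _).mp hz i) j

variable (Γ)

lemma diagMap_mem_gT_smul (γ : Γ) {I : Ideal A} {z : A ⊗[k] g} (hz : z ∈ gT k A g I) :
    diagMap k A g Γ γ z ∈ gT k A g (γ • I) := by
  refine Submodule.span_induction ?_ (by simp) (fun _ _ _ _ hx hy => ?_) (fun c _ _ hx => ?_) hz
  · rintro _ ⟨f, hf, v, rfl⟩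
    exact Submodule.subset_span ⟨_, Ideal.smul_mem_pointwise_smul γ f I hf, _, rfl⟩
  · rw [map_add]; exact add_mem hx hy
  · rw [map_smul]; exact Submodule.smul_mem _ c hx

lemma gT_inf_fixedSub_le_smul (γ : Γ) (I : Ideal A) :
    gT k A g I ⊓ fixedSub k A g Γ ≤ gT k A g (γ • I) := by
  rintro z ⟨hz, hfix⟩
  rw [← (mem_fixedSub k A g Γ).mp hfix γ]
  exact diagMap_mem_gT_smul Γ γ hz

end TensorIdeal

theorem statement0
    (hfree : ∀ γ : Γ, γ ≠ 1 → ∀ x : MaximalSpectrum A, gammaDot A Γ γ x ≠ x)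
    (η : MaximalSpectrum A →₀ ℕ)
    (hη : NoTwoInOrbit A Γ η.support) :
    gT k A g (idealOf η) ⊓ fixedSub k A g Γ =
      gT k A g (η.support.prod fun x => ∏ γ : Γ, (gammaDot A Γ γ x).asIdeal ^ η x) ⊓
        fixedSub k A g Γ := by
  have hprod : (η.support.prod fun x => ∏ γ : Γ, (gammaDot A Γ γ x).asIdeal ^ η x) =
      ⨅ γ : Γ, γ • idealOf η := calc
    _ = ∏ γ : Γ, γ • idealOf η := by
      rw [Finset.prod_comm]
      exact Finset.prod_congr rfl fun γ _ => (smul_idealOf γ η).symm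
    _ = ⨅ γ ∈ Finset.univ, γ • idealOf η :=
      Ideal.prod_eq_iInf_of_pairwise_isCoprime fun _ _ _ _ hγδ =>
        isCoprime_smul_idealOf hfree hη hγδ
    _ = ⨅ γ : Γ, γ • idealOf η := by simp only [Finset.mem_univ, iInf_true]
  rw [hprod, gT_iInf]
  refine le_antisymm (le_inf (le_iInf fun γ => gT_inf_fixedSub_le_smul Γ γ _) inf_le_right) ?_
  exact inf_le_inf_right _ ((iInf_le _ 1).trans (by rw [one_smul]))

end
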